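/- arXiv:2410.19295 — 4 statements merged into one kernel-verified Lean document; each statement's English description precedes it below -/
import Mathlib

section
/- If a graph G is a rank-r-perturbation of a graph G0 (r ≥ 0 an integer), then there exist an integer k ≤ 2^r and a k-colour-perturbation-model (H,ζ) of G0 such that G is the (H,ζ)-perturbed G0. -/
/-! ## Basic graph-theoretic definitions -/

/-- The `(m × n)`-grid: vertices `[m] × [n]`, with `(v₁,v₂)` adjacent to `(u₁,u₂)` iff
`v₁ = u₁` and `|v₂ - u₂| = 1`, or `v₂ = u₂` and `|v₁ - u₁| = 1`. -/
def gridGraph (m n : ℕ) : SimpleGraph (Fin m × Fin n) :=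
  SimpleGraph.fromRel (fun p q =>
    (p.1 = q.1 ∧ p.2.val + 1 = q.2.val) ∨ (p.2 = q.2 ∧ p.1.val + 1 = q.1.val))

/-- `H` is a minor of `G`: there is a family of nonempty, connected, pairwise disjoint
branch sets in `G`, one for each vertex of `H`, with an edge of `G` between the branch sets
of any two adjacent vertices of `H`. -/
def IsMinor {W V : Type} (H : SimpleGraph W) (G : SimpleGraph V) : Prop :=
  ∃ φ : W → Set V,
    (∀ w, (G.induce (φ w)).Connected) ∧
    (∀ w w', w ≠ w' → Disjoint (φ w) (φ w')) ∧
    (∀ w w', H.Adj w w' → ∃ u ∈ φ w, ∃ x ∈ φ w', G.Adj u x)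

/-- `H` is an induced minor of `G`: as for a minor, but additionally two distinct branch
sets are joined by an edge of `G` *exactly* when the corresponding vertices are adjacent
in `H` (this models deleting vertices and contracting edges only). -/
def IsInducedMinor {W V : Type} (H : SimpleGraph W) (G : SimpleGraph V) : Prop :=
  ∃ φ : W → Set V,
    (∀ w, (G.induce (φ w)).Connected) ∧
    (∀ w w', w ≠ w' → Disjoint (φ w) (φ w')) ∧
    (∀ w w', w ≠ w' → (H.Adj w w' ↔ ∃ u ∈ φ w, ∃ x ∈ φ w', G.Adj u x))

/-- The Hadwiger number of `G`: the largest `t` such that `K_t` is a minor of `G`. -/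
noncomputable def hadwigerNumber {V : Type} (G : SimpleGraph V) : ℕ :=
  sSup {t : ℕ | IsMinor (⊤ : SimpleGraph (Fin t)) G}

/-- `(Tr, β)` is a tree-decomposition of `G`. -/
def IsTreeDecomp {V T : Type} (G : SimpleGraph V) (Tr : SimpleGraph T) (β : T → Set V) : Prop :=
  Tr.IsTree ∧
  (∀ ⦃a b : V⦄, G.Adj a b → ∃ t, a ∈ β t ∧ b ∈ β t) ∧
  (∀ a : V, (Tr.induce {t | a ∈ β t}).Connected)

/-- `G` has a tree-decomposition of width at most `k` (all bags of size at most `k+1`). -/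
def TreewidthLE {V : Type} (G : SimpleGraph V) (k : ℕ) : Prop :=
  ∃ (T : Type) (Tr : SimpleGraph T) (β : T → Set V),
    IsTreeDecomp G Tr β ∧ ∀ t, (β t).ncard ≤ k + 1

/-- The treewidth of a (finite) graph. -/
noncomputable def treewidth {V : Type} (G : SimpleGraph V) : ℕ :=
  sInf {k : ℕ | TreewidthLE G k}

/-- A graph is planar iff it has neither a `K₅`- nor a `K₃,₃`-minor (Wagner's theorem). -/
def IsPlanar {V : Type} (G : SimpleGraph V) : Prop :=
  ¬ IsMinor (⊤ : SimpleGraph (Fin 5)) G ∧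
  ¬ IsMinor (completeBipartiteGraph (Fin 3) (Fin 3)) G

/-! ## Separations -/

/-- `(A, B)` is a separation of `G`. -/
def IsSeparation {V : Type} (G : SimpleGraph V) (A B : Set V) : Prop :=
  A ∪ B = Set.univ ∧ ∀ a ∈ A \ B, ∀ b ∈ B \ A, ¬ G.Adj a b

/-- `(A, B)` is `α`-balanced for `X`. -/
def IsBalancedFor {V : Type} (α : ℝ) (X A B : Set V) : Prop :=
  ((X ∩ (A \ B)).ncard : ℝ) ≤ α * (X.ncard : ℝ) ∧
  ((X ∩ (B \ A)).ncard : ℝ) ≤ α * (X.ncard : ℝ)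

/-! ## Local complementation and vertex-minors -/

/-- Local complementation of `G` at `v`: complement the adjacency relation inside the
neighbourhood of `v`. -/
def localComplement {V : Type} (G : SimpleGraph V) (v : V) : SimpleGraph V where
  Adj x y := x ≠ y ∧ (G.Adj x y ↔ ¬ (G.Adj v x ∧ G.Adj v y))
  symm := by
    constructor
    intro x y h
    obtain ⟨hxy, hiff⟩ := h
    refine ⟨hxy.symm, ?_⟩
    constructor
    · intro hyx hc
      exact (hiff.mp hyx.symm) ⟨hc.2, hc.1⟩
    · intro hn
      exact (hiff.mpr (fun hc => hn ⟨hc.2, hc.1⟩)).symm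
  loopless := ⟨fun x h => h.1 rfl⟩

/-- `H` is a vertex-minor of `G`: `H` is isomorphic to a graph obtained from `G` by a
sequence of local complementations and vertex deletions (local complementations commute
with deletions of other vertices, so we may perform all complementations first and then
take an induced subgraph). -/
def IsVertexMinor {W V : Type} (H : SimpleGraph W) (G : SimpleGraph V) : Prop :=
  ∃ (l : List V) (s : Set V),
    Nonempty (H ≃g ((l.foldl localComplement G).induce s))

/-! ## Graph classes (represented on vertex sets `Fin n`) -/

/-- A class of finite graphs, given by its members on the canonical vertex sets `Fin n`. -/
def GraphClass := ∀ ⦃n : ℕ⦄, SimpleGraph (Fin n) → Prop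

/-- A class is hereditary if it is closed under (isomorphic copies of) induced subgraphs. -/
def GraphClass.Hereditary (𝒢 : GraphClass) : Prop :=
  ∀ ⦃n m : ℕ⦄ (G : SimpleGraph (Fin n)) (H : SimpleGraph (Fin m)),
    𝒢 G → (∃ f : Fin m ↪ Fin n, ∀ a b, H.Adj a b ↔ G.Adj (f a) (f b)) → 𝒢 H

/-- A class is `(tw,had)`-bounded if treewidth is bounded by a function of the Hadwiger
number on the class. -/
def GraphClass.TwHadBounded (𝒢 : GraphClass) : Prop :=
  ∃ f : ℕ → ℕ, ∀ ⦃n : ℕ⦄ (G : SimpleGraph (Fin n)), 𝒢 G →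
    treewidth G ≤ f (hadwigerNumber G)

/-- A class is vertex-minor-closed if it contains every vertex-minor of each member. -/
def GraphClass.VertexMinorClosed (𝒢 : GraphClass) : Prop :=
  ∀ ⦃n m : ℕ⦄ (G : SimpleGraph (Fin n)) (H : SimpleGraph (Fin m)),
    𝒢 G → IsVertexMinor H G → 𝒢 H

/-- A class is proper if some graph does not belong to it. -/
def GraphClass.Proper (𝒢 : GraphClass) : Prop :=
  ∃ (n : ℕ) (G : SimpleGraph (Fin n)), ¬ 𝒢 G

/-! ## Ordered graphs -/

/-- An ordered graph `(G, ≤)` is ×-free: whenever edges `uv` and `xy` (with `u < v`,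
`x < y`) cross, at least one of `ux, uy, vx, vy` is an edge. -/
def XFree {V : Type} [LinearOrder V] (G : SimpleGraph V) : Prop :=
  ∀ ⦃u v x y : V⦄, G.Adj u v → G.Adj x y → u < v → x < y →
    ((u < x ∧ x < v ∧ v < y) ∨ (x < u ∧ u < y ∧ y < v)) →
    (G.Adj u x ∨ G.Adj u y ∨ G.Adj v x ∨ G.Adj v y)

/-! ## Outer-string graphs -/

/-- `G` is an outer-string graph: the intersection graph of a family of strings (curves)
in the closed unit disk of the plane, each meeting the boundary circle in exactly one
point, which is an endpoint of the string (its root), with distinct strings having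
distinct roots. -/
def IsOuterStringGraph {V : Type} (G : SimpleGraph V) : Prop :=
  ∃ γ : V → ContinuousMap unitInterval (EuclideanSpace ℝ (Fin 2)),
    (∀ w, Set.range (γ w) ⊆ Metric.closedBall 0 1) ∧
    (∀ w, Set.range (γ w) ∩ Metric.sphere (0 : EuclideanSpace ℝ (Fin 2)) 1 = {γ w 0}) ∧
    (Function.Injective fun w => γ w 0) ∧
    (∀ u w, G.Adj u w ↔ u ≠ w ∧ (Set.range (γ u) ∩ Set.range (γ w)).Nonempty)

/-! ## Cyclic orders, chord diagrams and circle graphs -/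

/-- A cyclic order on `α`: a ternary relation satisfying cyclicity, asymmetry,
transitivity and totality. -/
structure CyclicOrder (α : Type) where
  R : α → α → α → Prop
  cycle : ∀ {a b c}, R a b c → R b c a
  asymm : ∀ {a b c}, R a b c → ¬ R a c b
  trans : ∀ {a b c d}, R a b c → R a c d → R a b d
  total : ∀ {a b c}, a ≠ b → a ≠ c → b ≠ c → R a b c ∨ R a c b

/-- `(a,b,c,d)` occur in this cyclic order. -/
def CyclicOrder.Tuple4 {α : Type} (C : CyclicOrder α) (a b c d : α) : Prop :=
  C.R a b c ∧ C.R a b d ∧ C.R a c d ∧ C.R b c d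

/-- The chords `{p.1, p.2}` and `{q.1, q.2}` cross in the cyclic order `C`. -/
def CyclicOrder.ChordsCross {α : Type} (C : CyclicOrder α) (p q : α × α) : Prop :=
  C.Tuple4 p.1 q.1 p.2 q.2 ∨ C.Tuple4 p.1 q.2 p.2 q.1

/-- `G` is a circle graph: the crossing graph of a chord diagram, i.e. there exist a
cyclic order and an assignment of chords with pairwise distinct endpoints to the vertices
such that adjacency is exactly crossing of chords. -/
def IsCircleGraph {V : Type} (G : SimpleGraph V) : Prop :=
  ∃ (α : Type) (C : CyclicOrder α) (e : V → α × α),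
    Function.Injective (fun x : V × Bool => if x.2 then (e x.1).1 else (e x.1).2) ∧
    (∀ u w, G.Adj u w ↔ u ≠ w ∧ C.ChordsCross (e u) (e w))

/-! ## Colour perturbations and rank perturbations -/

/-- The `(H,ζ)`-perturbation of `G₀`, where `Hrel` is the (symmetric, possibly reflexive)
edge relation of a colour-pattern graph `H` on `Fin k` and `ζ` is a colouring: distinct
vertices `v, w` are adjacent iff exactly one of `G₀.Adj v w` and `Hrel (ζ v) (ζ w)` holds. -/
def perturbedGraph {V : Type} {k : ℕ} (G0 : SimpleGraph V)
    (Hrel : Fin k → Fin k → Prop) (ζ : V → Fin k) : SimpleGraph V :=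
  SimpleGraph.fromRel (fun a b => Xor' (G0.Adj a b) (Hrel (ζ a) (ζ b)))

open scoped Classical in
/-- The adjacency matrix of `G` over `GF(2)`. -/
noncomputable def adjMatGF2 {V : Type} [Fintype V] (G : SimpleGraph V) :
    Matrix V V (ZMod 2) :=
  Matrix.of fun a b => if G.Adj a b then 1 else 0

/-- `G` is a rank-`r`-perturbation of `G₀`: the `GF(2)` adjacency matrix of `G` is
obtained from `A₀ + P`, with `P` symmetric of rank `r`, by zeroing the diagonal. -/
def IsRankPerturbation {V : Type} [Fintype V] (r : ℕ) (G G0 : SimpleGraph V) : Prop :=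
  ∃ P : Matrix V V (ZMod 2), P.IsSymm ∧ P.rank = r ∧
    ∀ a b : V, a ≠ b → adjMatGF2 G a b = adjMatGF2 G0 a b + P a b

/-! ## Subdivisions -/

/-- `S` is a subdivision of `G`, witnessed by the embedding `ι` of branch vertices and the
family `P` of subdivision paths, one for each (oriented) edge of `G`. -/
def IsSubdivisionWith {V W : Type} (G : SimpleGraph V) (S : SimpleGraph W)
    (ι : V ↪ W) (P : ∀ ⦃u v : V⦄, G.Adj u v → S.Walk (ι u) (ι v)) : Prop :=
  (∀ ⦃u v⦄ (h : G.Adj u v), (P h).IsPath) ∧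
  (∀ ⦃u v⦄ (h : G.Adj u v), P h.symm = (P h).reverse) ∧
  (∀ ⦃u v⦄ (h : G.Adj u v) (a : V), ι a ∈ (P h).support → a = u ∨ a = v) ∧
  (∀ ⦃u v⦄ (h : G.Adj u v) ⦃u' v'⦄ (h' : G.Adj u' v'), s(u, v) ≠ s(u', v') →
    ∀ w, w ∈ (P h).support → w ∈ (P h').support → w ∈ Set.range ι) ∧
  (∀ w : W, w ∈ Set.range ι ∨ ∃ (u v : V) (h : G.Adj u v), w ∈ (P h).support) ∧
  (∀ ⦃a b : W⦄, S.Adj a b → ∃ (u v : V) (h : G.Adj u v), s(a, b) ∈ (P h).edges)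

/-- `S` is a subdivision of `G`. -/
def IsSubdivision {V W : Type} (G : SimpleGraph V) (S : SimpleGraph W) : Prop :=
  ∃ (ι : V ↪ W) (P : ∀ ⦃u v : V⦄, G.Adj u v → S.Walk (ι u) (ι v)),
    IsSubdivisionWith G S ι P

/-- `S` is a proper subdivision of `G`: every subdivision path has length at least `2`. -/
def IsProperSubdivision {V W : Type} (G : SimpleGraph V) (S : SimpleGraph W) : Prop :=
  ∃ (ι : V ↪ W) (P : ∀ ⦃u v : V⦄, G.Adj u v → S.Walk (ι u) (ι v)),
    IsSubdivisionWith G S ι P ∧ ∀ ⦃u v⦄ (h : G.Adj u v), 2 ≤ (P h).length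

/-- `S` is the `k`-subdivision of `G`: every subdivision path has length exactly `k + 1`
(i.e. every edge is replaced by a path with exactly `k` internal vertices). -/
def IsKSubdivision {V W : Type} (k : ℕ) (G : SimpleGraph V) (S : SimpleGraph W) : Prop :=
  ∃ (ι : V ↪ W) (P : ∀ ⦃u v : V⦄, G.Adj u v → S.Walk (ι u) (ι v)),
    IsSubdivisionWith G S ι P ∧ ∀ ⦃u v⦄ (h : G.Adj u v), (P h).length = k + 1

/-!
Colour each vertex `v` by the column `P.col v` of the perturbation matrix `P`. Since `P` is
symmetric, its entry `P v w` depends only on the columns of `v` and `w`, so `P` descends to a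
relation on the column space, which has `2 ^ rank P` elements over `GF(2)`. Adjacency in `G`
is then adjacency in `G₀` toggled exactly where this relation holds.
-/

theorem Relation.map_apply_apply_of_respects {α β γ δ : Type*} {r : α → β → Prop}
    {f : α → γ} {g : β → δ}
    (hr : ∀ a a' b b', f a = f a' → g b = g b' → r a b → r a' b') (a : α) (b : β) :
    Relation.Map r f g (f a) (g b) ↔ r a b := by
  refine ⟨?_, fun h => ⟨a, b, h, rfl, rfl⟩⟩
  rintro ⟨a', b', h, ha, hb⟩
  exact hr a' a b' b ha hb h

namespace Matrix

variable {n R : Type*}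

theorem IsSymm.apply_eq_of_col_eq {P : Matrix n n R} (hP : P.IsSymm) {v v' w w' : n}
    (hv : P.col v = P.col v') (hw : P.col w = P.col w') : P v w = P v' w' :=
  calc P v w = P.col w' v := congrFun hw v
    _ = P.col v w' := hP.apply w' v
    _ = P.col v' w' := by rw [hv]
    _ = P v' w' := hP.apply v' w'

variable [Fintype n]

theorem col_mem_range_mulVecLin [DecidableEq n] [CommSemiring R] (P : Matrix n n R) (v : n) :
    P.col v ∈ LinearMap.range P.mulVecLin :=
  ⟨Pi.single v 1, P.mulVec_single_one v⟩

theorem natCard_range_mulVecLin [Field R] (P : Matrix n n R) :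
    Nat.card (LinearMap.range P.mulVecLin) = Nat.card R ^ P.rank :=
  Module.natCard_eq_pow_finrank

end Matrix

theorem adj_iff_xor_of_adjMatGF2_eq_add {V : Type} [Fintype V] {G G0 : SimpleGraph V}
    {a b : V} {x : ZMod 2} (h : adjMatGF2 G a b = adjMatGF2 G0 a b + x) :
    G.Adj a b ↔ Xor' (G0.Adj a b) (x = 1) := by
  simp only [adjMatGF2, Matrix.of_apply] at h
  obtain rfl | rfl : x = 0 ∨ x = 1 := (by decide : ∀ y : ZMod 2, y = 0 ∨ y = 1) x <;>
    by_cases hG : G.Adj a b <;> by_cases hG0 : G0.Adj a b <;> simp +decide [hG, hG0, Xor'] at h ⊢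

theorem perturbedGraph_adj {V : Type} {k : ℕ} {G0 : SimpleGraph V}
    {Hrel : Fin k → Fin k → Prop} (hH : Symmetric Hrel) (ζ : V → Fin k) {a b : V} :
    (perturbedGraph G0 Hrel ζ).Adj a b ↔ a ≠ b ∧ Xor' (G0.Adj a b) (Hrel (ζ a) (ζ b)) := by
  have hsymm :
      Xor' (G0.Adj b a) (Hrel (ζ b) (ζ a)) ↔ Xor' (G0.Adj a b) (Hrel (ζ a) (ζ b)) := by
    rw [G0.adj_comm, show Hrel (ζ b) (ζ a) ↔ Hrel (ζ a) (ζ b) from ⟨@hH _ _, @hH _ _⟩]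
  rw [perturbedGraph, SimpleGraph.fromRel_adj, hsymm, or_self]

theorem exists_perturbedGraph_of_colouring {V C : Type} [Finite C] {G G0 : SimpleGraph V}
    (H : C → C → Prop) (hH : Symmetric H) (ζ : V → C)
    (hG : ∀ a b, a ≠ b → (G.Adj a b ↔ Xor' (G0.Adj a b) (H (ζ a) (ζ b)))) :
    ∃ (Hrel : Fin (Nat.card C) → Fin (Nat.card C) → Prop) (ζ' : V → Fin (Nat.card C)),
      Symmetric Hrel ∧ G = perturbedGraph G0 Hrel ζ' := by
  let e := Finite.equivFin C
  have hH' : Symmetric fun i j => H (e.symm i) (e.symm j) := fun _ _ h => hH h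
  refine ⟨fun i j => H (e.symm i) (e.symm j), e ∘ ζ, hH', ?_⟩
  ext a b
  rw [perturbedGraph_adj hH']
  simp only [Function.comp_apply, Equiv.symm_apply_apply]
  exact ⟨fun h => ⟨h.ne, (hG a b h.ne).1 h⟩, fun ⟨hab, h⟩ => (hG a b hab).2 h⟩

/-- If `G` is a rank-`r`-perturbation of `G₀`, then there are `k ≤ 2^r`
and a `k`-colour-perturbation-model `(H,ζ)` of `G₀` such that `G` is the `(H,ζ)`-perturbed
`G₀`. -/
theorem rank_perturbation_gives_colour_perturbation_model (r : ℕ) {V : Type} [Fintype V]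
    (G G0 : SimpleGraph V) (hp : IsRankPerturbation r G G0) :
    ∃ k : ℕ, k ≤ 2 ^ r ∧ ∃ (Hrel : Fin k → Fin k → Prop) (ζ : V → Fin k),
      Symmetric Hrel ∧ G = perturbedGraph G0 Hrel ζ := by
  classical
  obtain ⟨P, hP, rfl, hPG⟩ := hp
  let column : V → LinearMap.range P.mulVecLin :=
    fun v => ⟨P.col v, P.col_mem_range_mulVecLin v⟩
  let toggled : V → V → Prop := fun v w => P v w = 1
  have hcolour : ∀ a b, Relation.Map toggled column column (column a) (column b) ↔ P a b = 1 :=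
    Relation.map_apply_apply_of_respects fun a a' b b' ha hb h =>
      (hP.apply_eq_of_col_eq (congrArg Subtype.val ha) (congrArg Subtype.val hb)).symm.trans h
  have : Std.Symm toggled := ⟨fun a b h => (hP.apply a b).trans h⟩
  refine ⟨_, by rw [P.natCard_range_mulVecLin, Nat.card_zmod],
    exists_perturbedGraph_of_colouring (Relation.Map toggled column column)
      (fun _ _ h => symm h) column ?_⟩
  intro a b hab
  rw [hcolour]
  exact adj_iff_xor_of_adjMatGF2_eq_add (hPG a b hab)
end

section
/- Let k ≥ 1 be an integer, let C be a cyclic order on the vertex set of the complete graph K_{4k}, and let (E_1, …, E_k) be a partition of the edge set of K_{4k}. Then there exists i ∈ [k] such that the graph with vertex set V(K_{4k}) and edge set E_i contains both a pair of non-incident edges that cross (with respect to C) and a pair of non-incident edges that do not cross. -/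
/-!
With `n = 4k` there are `n.choose 2 = k (8k - 2)` edges, so some colour class has at least
`8k - 2 = 2n - 2` edges. Cutting the circle at a point turns edges into chords of a line, and
crossing into interleaving. A family of chords in which no two disjoint chords interleave, and also
one in which any two disjoint chords interleave, always has a point on at most two of its chords;
deleting such points one at a time shows that it has at most `2n - 3` chords. So the large colour
class contains a crossing pair and a non-crossing pair of disjoint edges.
-/

open Finset

lemma Finset.exists_lt_lt_of_two_lt_card {α : Type*} [LinearOrder α] {s : Finset α}
    (hs : 2 < #s) : ∃ a ∈ s, ∃ b ∈ s, ∃ c ∈ s, a < b ∧ b < c := by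
  have hne : s.Nonempty := card_pos.1 (by omega)
  obtain ⟨b, hb⟩ : ((s.erase (s.min' hne)).erase (s.max' hne)).Nonempty := by
    have := pred_card_le_card_erase (s := s.erase (s.min' hne)) (a := s.max' hne)
    have := pred_card_le_card_erase (s := s) (a := s.min' hne)
    exact card_pos.1 (by omega)
  simp only [mem_erase] at hb
  exact ⟨_, s.min'_mem hne, b, hb.2.2, _, s.max'_mem hne,
    lt_of_le_of_ne (s.min'_le b hb.2.2) (Ne.symm hb.2.1),
    lt_of_le_of_ne (s.le_max' b hb.2.2) hb.1⟩

lemma Finset.exists_card_le_mul_card_of_subset_biUnion {ι β : Type*} [Fintype ι] [Nonempty ι]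
    [DecidableEq β] {A : Finset β} {E : ι → Finset β} (h : A ⊆ univ.biUnion E) :
    ∃ i, #A ≤ Fintype.card ι * #(E i) := by
  obtain ⟨i, -, hi⟩ := univ.exists_max_image (fun i => #(E i)) univ_nonempty
  exact ⟨i, (card_le_card h).trans
    (card_univ (α := ι) ▸ card_biUnion_le_card_mul _ _ _ fun j _ => hi j (mem_univ j))⟩

lemma Nat.choose_two_four_mul (k : ℕ) : (4 * k).choose 2 = k * (8 * k - 2) := by
  rw [Nat.choose_two_right]
  refine Nat.div_eq_of_eq_mul_left two_pos ?_
  rw [Nat.mul_sub_one, Nat.mul_sub, Nat.sub_mul]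
  ring_nf

def ChordsOn (G : Finset ℕ) (S : Finset (ℕ × ℕ)) : Prop :=
  ∀ p ∈ S, p.1 ∈ G ∧ p.2 ∈ G ∧ p.1 < p.2

def EndpointsDisjoint (p q : ℕ × ℕ) : Prop :=
  p.1 ≠ q.1 ∧ p.1 ≠ q.2 ∧ p.2 ≠ q.1 ∧ p.2 ≠ q.2

def Interleave (p q : ℕ × ℕ) : Prop :=
  (p.1 < q.1 ∧ q.1 < p.2 ∧ p.2 < q.2) ∨ (q.1 < p.1 ∧ p.1 < q.2 ∧ q.2 < p.2)

def incidentChords (S : Finset (ℕ × ℕ)) (v : ℕ) : Finset (ℕ × ℕ) :=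
  S.filter fun p => p.1 = v ∨ p.2 = v

def chordInterior (G : Finset ℕ) (p : ℕ × ℕ) : Finset ℕ :=
  G.filter fun x => p.1 < x ∧ x < p.2

namespace ChordsOn

variable {G : Finset ℕ} {S : Finset (ℕ × ℕ)}

lemma erase (hS : ChordsOn G S) (v : ℕ) : ChordsOn (G.erase v) (S \ incidentChords S v) := by
  intro p hp
  simp only [incidentChords, mem_sdiff, mem_filter, not_and, not_or] at hp
  obtain ⟨h₁, h₂, h₁₂⟩ := hS p hp.1
  exact ⟨mem_erase.2 ⟨(hp.2 hp.1).1, h₁⟩, mem_erase.2 ⟨(hp.2 hp.1).2, h₂⟩, h₁₂⟩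

lemma two_le_card (hS : ChordsOn G S) (hne : S.Nonempty) : 2 ≤ #G := by
  obtain ⟨p, hp⟩ := hne
  obtain ⟨h₁, h₂, h₁₂⟩ := hS p hp
  calc 2 = #({p.1, p.2} : Finset ℕ) := (card_pair h₁₂.ne).symm
    _ ≤ #G := card_le_card (insert_subset h₁ (singleton_subset_iff.2 h₂))

lemma card_le_one (hS : ChordsOn G S) (hG : #G ≤ 2) : #S ≤ 1 := by
  refine Finset.card_le_one.2 fun p hp q hq => ?_
  obtain ⟨hp₁, hp₂, hp₁₂⟩ := hS p hp
  obtain ⟨hq₁, hq₂, hq₁₂⟩ := hS q hq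
  have hGp : G = {p.1, p.2} := (eq_of_subset_of_card_le
    (insert_subset hp₁ (singleton_subset_iff.2 hp₂)) (by rw [card_pair hp₁₂.ne]; exact hG)).symm
  rw [hGp, mem_insert, mem_singleton] at hq₁ hq₂
  exact Prod.ext (by omega) (by omega)

-- The subtraction is truncated: for `#G ≤ 1` the bound reads `#S ≤ 0`, which holds as `S = ∅`.
theorem card_le_of_exists_card_incidentChords_le_two {P : Finset (ℕ × ℕ) → Prop}
    (hP : ∀ ⦃S T⦄, T ⊆ S → P S → P T)
    (hdeg : ∀ ⦃G S⦄, ChordsOn G S → P S → G.Nonempty → ∃ v ∈ G, #(incidentChords S v) ≤ 2)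
    (hS : ChordsOn G S) (hPS : P S) : #S ≤ 2 * #G - 3 := by
  induction G using Finset.strongInduction generalizing S with
  | H G ih =>
  rcases le_or_gt #G 2 with hG | hG
  · rcases S.eq_empty_or_nonempty with rfl | hne
    · simp
    · have := hS.card_le_one hG
      have := hS.two_le_card hne
      omega
  · obtain ⟨v, hv, hdeg_v⟩ := hdeg hS hPS (card_pos.1 (by omega))
    have hrest := ih _ (erase_ssubset hv) (hS.erase v) (hP sdiff_subset hPS)
    have hsplit : #(S \ incidentChords S v) + #(incidentChords S v) = #S :=
      card_sdiff_add_card_eq_card (filter_subset _ _)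
    rw [card_erase_of_mem hv] at hrest
    omega

/- Either the least point `a` has at most two chords, or a neighbour `y` of `a` lying between two
other neighbours has only the chord `ay`: any other chord at `y` would be disjoint from, and fail to
interleave with, one of the two outer chords at `a`. -/
lemma exists_card_incidentChords_le_two_of_interleave (hS : ChordsOn G S)
    (hpair : ∀ p ∈ S, ∀ q ∈ S, EndpointsDisjoint p q → Interleave p q) (hG : G.Nonempty) :
    ∃ v ∈ G, #(incidentChords S v) ≤ 2 := by
  obtain ⟨a, haG, ha_min⟩ : ∃ a ∈ G, ∀ x ∈ G, a ≤ x :=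
    ⟨G.min' hG, G.min'_mem hG, fun x hx => G.min'_le x hx⟩
  have hinc : ∀ p ∈ incidentChords S a, p ∈ S ∧ p.1 = a := by
    intro p hp
    simp only [incidentChords, mem_filter] at hp
    have := ha_min _ (hS p hp.1).1
    have := (hS p hp.1).2.2
    exact ⟨hp.1, by omega⟩
  by_cases ha : #(incidentChords S a) ≤ 2
  · exact ⟨a, haG, ha⟩
  have hN : ∀ y ∈ (incidentChords S a).image Prod.snd, (a, y) ∈ S := by
    intro y hy
    obtain ⟨p, hp, rfl⟩ := mem_image.1 hy
    obtain ⟨hpS, hpa⟩ := hinc p hp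
    rwa [← hpa]
  obtain ⟨y₁, hy₁, y, hy, y₃, hy₃, h₁, h₃⟩ := exists_lt_lt_of_two_lt_card (s :=
    (incidentChords S a).image Prod.snd) (by
      rw [card_image_of_injOn fun p hp q hq hpq =>
        Prod.ext ((hinc p hp).2.trans (hinc q hq).2.symm) hpq]
      omega)
  have hy_deg : incidentChords S y ⊆ {(a, y)} := by
    intro p hp
    simp only [incidentChords, mem_filter] at hp
    obtain ⟨hpS, hpy⟩ := hp
    have i₁ := hpair _ (hN y₁ hy₁) p hpS
    have i₃ := hpair _ (hN y₃ hy₃) p hpS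
    have := ha_min _ (hS p hpS).1
    have := (hS p hpS).2.2
    have := (hS _ (hN y₁ hy₁)).2.2
    simp only [EndpointsDisjoint, Interleave, imp_iff_not_or] at i₁ i₃
    rw [mem_singleton]
    exact Prod.ext (by omega) (by omega)
  refine ⟨y, (hS _ (hN y hy)).2.1, ?_⟩
  calc #(incidentChords S y) ≤ #{(a, y)} := card_le_card hy_deg
    _ ≤ 2 := by simp

lemma card_incidentChords_le_two (hS : ChordsOn G S) {v : ℕ}
    (hshort : ∀ p ∈ incidentChords S v, chordInterior G p = ∅) : #(incidentChords S v) ≤ 2 := by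
  have hshort' : ∀ p ∈ S, p.1 = v ∨ p.2 = v → ∀ x ∈ G, ¬ (p.1 < x ∧ x < p.2) :=
    fun p hp hpv => filter_eq_empty_iff.1 (hshort p (mem_filter.2 ⟨hp, hpv⟩))
  rw [incidentChords, filter_or]
  refine (card_union_le _ _).trans (add_le_add (Finset.card_le_one.2 ?_) (Finset.card_le_one.2 ?_))
  all_goals
    intro p hp q hq
    rw [mem_filter] at hp hq
    have hp' := hshort' p hp.1 (by tauto)
    have hq' := hshort' q hq.1 (by tauto)
    obtain ⟨hp₁, hp₂, hp₁₂⟩ := hS p hp.1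
    obtain ⟨hq₁, hq₂, hq₁₂⟩ := hS q hq.1
  · have := hp' q.2 hq₂
    have := hq' p.2 hp₂
    exact Prod.ext (by omega) (by omega)
  · have := hp' q.1 hq₁
    have := hq' p.1 hp₁
    exact Prod.ext (by omega) (by omega)

/- Among the chords with a point strictly inside, take one with fewest such points and a point `c`
inside it: every chord at `c` stays within it, hence has no point inside, so joins `c` to a
neighbouring point. -/
lemma exists_card_incidentChords_le_two_of_not_interleave (hS : ChordsOn G S)
    (hpair : ∀ p ∈ S, ∀ q ∈ S, EndpointsDisjoint p q → ¬ Interleave p q) (hG : G.Nonempty) :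
    ∃ v ∈ G, #(incidentChords S v) ≤ 2 := by
  by_cases hlong : ∃ r ∈ S, (chordInterior G r).Nonempty
  · obtain ⟨r, hr, hmin⟩ := (S.filter fun r => (chordInterior G r).Nonempty).exists_min_image
      (fun r => #(chordInterior G r)) (filter_nonempty_iff.2 hlong)
    obtain ⟨hrS, c, hc⟩ := mem_filter.1 hr
    have hcG := (mem_filter.1 hc).1
    refine ⟨c, hcG, card_incidentChords_le_two hS fun q hq => ?_⟩
    simp only [incidentChords, chordInterior, mem_filter] at hq hc
    obtain ⟨hqS, hqc⟩ := hq
    obtain ⟨-, hrc, hcr⟩ := hc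
    by_contra hne
    have hqr := hpair q hqS r hrS
    obtain ⟨hq₁, hq₂, hq₁₂⟩ := hS q hqS
    simp only [EndpointsDisjoint, Interleave, imp_iff_not_or] at hqr
    have hsub : chordInterior G q ⊂ chordInterior G r := by
      rw [ssubset_iff_of_subset]
      · refine ⟨c, mem_filter.2 ⟨hcG, hrc, hcr⟩, fun h => ?_⟩
        have := (mem_filter.1 h).2
        omega
      · intro x hx
        simp only [chordInterior, mem_filter] at hx ⊢
        obtain ⟨hxG, hqx, hxq⟩ := hx
        exact ⟨hxG, by omega, by omega⟩
    exact (card_lt_card hsub).not_ge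
      (hmin q (mem_filter.2 ⟨hqS, nonempty_iff_ne_empty.2 hne⟩))
  · push Not at hlong
    obtain ⟨v, hv⟩ := hG
    exact ⟨v, hv, card_incidentChords_le_two hS fun q hq => hlong q (mem_filter.1 hq).1⟩

theorem card_le_of_interleave (hS : ChordsOn G S)
    (hpair : ∀ p ∈ S, ∀ q ∈ S, EndpointsDisjoint p q → Interleave p q) : #S ≤ 2 * #G - 3 :=
  card_le_of_exists_card_incidentChords_le_two
    (P := fun S => ∀ p ∈ S, ∀ q ∈ S, EndpointsDisjoint p q → Interleave p q)
    (fun _ _ hTS hS p hp q hq => hS p (hTS hp) q (hTS hq))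
    (fun _ _ hS hP hG => hS.exists_card_incidentChords_le_two_of_interleave hP hG) hS hpair

theorem card_le_of_not_interleave (hS : ChordsOn G S)
    (hpair : ∀ p ∈ S, ∀ q ∈ S, EndpointsDisjoint p q → ¬ Interleave p q) : #S ≤ 2 * #G - 3 :=
  card_le_of_exists_card_incidentChords_le_two
    (P := fun S => ∀ p ∈ S, ∀ q ∈ S, EndpointsDisjoint p q → ¬ Interleave p q)
    (fun _ _ hTS hS p hp q hq => hS p (hTS hp) q (hTS hq))
    (fun _ _ hS hP hG => hS.exists_card_incidentChords_le_two_of_not_interleave hP hG) hS hpair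

end ChordsOn

namespace CyclicOrder

variable {α : Type} {C : CyclicOrder α} {a b c p : α}

lemma R.ne₁₂ (h : C.R a b c) : a ≠ b := by
  rintro rfl
  exact C.asymm h (C.cycle h)

lemma R.ne₁₃ (h : C.R a b c) : a ≠ c := by
  rintro rfl
  exact C.asymm h (C.cycle (C.cycle h))

lemma R.ne₂₃ (h : C.R a b c) : b ≠ c := (C.cycle h).ne₁₂

lemma R_of_R_of_R (h₁ : C.R p a b) (h₂ : C.R p b c) : C.R a b c := by
  have hac : a ≠ c := by
    rintro rfl
    exact C.asymm h₁ h₂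
  refine (C.total h₁.ne₂₃ hac h₂.ne₂₃).resolve_right fun h => ?_
  exact C.asymm (C.trans (C.cycle (C.cycle h₁)) (C.cycle (C.cycle h))) (C.cycle h₂)

variable (C) in
/-- The strict linear order obtained by cutting the circle just before `p`. -/
def LtFrom (p a b : α) : Prop := (a = p ∧ b ≠ p) ∨ C.R p a b

lemma ltFrom_irrefl (a : α) : ¬ C.LtFrom p a a := by
  rintro (⟨rfl, h⟩ | h)
  exacts [h rfl, h.ne₂₃ rfl]

lemma LtFrom.trans (hab : C.LtFrom p a b) (hbc : C.LtFrom p b c) : C.LtFrom p a c := by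
  rcases hab with ⟨rfl, hb⟩ | hab <;> rcases hbc with ⟨rfl, -⟩ | hbc
  · exact absurd rfl hb
  · exact Or.inl ⟨rfl, hbc.ne₁₃.symm⟩
  · exact absurd rfl hab.ne₁₃
  · exact Or.inr (C.trans hab hbc)

lemma ltFrom_or_ltFrom (hab : a ≠ b) : C.LtFrom p a b ∨ C.LtFrom p b a := by
  by_cases ha : a = p
  · exact Or.inl (Or.inl ⟨ha, fun hb => hab (ha.trans hb.symm)⟩)
  by_cases hb : b = p
  · exact Or.inr (Or.inl ⟨hb, ha⟩)
  exact (C.total (Ne.symm ha) (Ne.symm hb) hab).imp Or.inr Or.inr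

lemma R_of_ltFrom_of_ltFrom (hab : C.LtFrom p a b) (hbc : C.LtFrom p b c) : C.R a b c := by
  rcases hab with ⟨rfl, hb⟩ | hab <;> rcases hbc with ⟨rfl, -⟩ | hbc
  · exact absurd rfl hb
  · exact hbc
  · exact absurd rfl hab.ne₁₃
  · exact R_of_R_of_R hab hbc

section Rank

variable [Fintype α]

variable (C) in
open scoped Classical in
noncomputable def rank (p a : α) : ℕ := #{b | C.LtFrom p b a}

lemma rank_lt_rank (h : C.LtFrom p a b) : C.rank p a < C.rank p b := by
  classical
  refine card_lt_card ⟨fun c hc => ?_, fun hsub => ?_⟩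
  · simp only [mem_filter, mem_univ, true_and] at hc ⊢
    exact hc.trans h
  · have := hsub (mem_filter.2 ⟨mem_univ a, h⟩)
    exact ltFrom_irrefl a (mem_filter.1 this).2

lemma ltFrom_of_rank_lt (h : C.rank p a < C.rank p b) : C.LtFrom p a b := by
  rcases eq_or_ne a b with rfl | hab
  · exact absurd h (lt_irrefl _)
  exact (ltFrom_or_ltFrom hab).resolve_right fun hba => (rank_lt_rank hba).not_gt h

variable (C p) in
lemma rank_injective : Function.Injective (C.rank p) := by
  intro a b h
  by_contra hab
  rcases ltFrom_or_ltFrom (C := C) (p := p) hab with h' | h' <;> have := rank_lt_rank h' <;> omega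

lemma R_iff_rank :
    C.R a b c ↔ (C.rank p a < C.rank p b ∧ C.rank p b < C.rank p c) ∨
      (C.rank p b < C.rank p c ∧ C.rank p c < C.rank p a) ∨
      (C.rank p c < C.rank p a ∧ C.rank p a < C.rank p b) := by
  have hR : ∀ {a b c}, C.rank p a < C.rank p b → C.rank p b < C.rank p c → C.R a b c :=
    fun h₁ h₂ => R_of_ltFrom_of_ltFrom (ltFrom_of_rank_lt h₁) (ltFrom_of_rank_lt h₂)
  constructor
  · intro h
    have hab := (rank_injective C p).ne h.ne₁₂
    have hac := (rank_injective C p).ne h.ne₁₃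
    have hbc := (rank_injective C p).ne h.ne₂₃
    by_contra hn
    refine C.asymm h ?_
    rcases (by omega : (C.rank p a < C.rank p c ∧ C.rank p c < C.rank p b) ∨
      (C.rank p c < C.rank p b ∧ C.rank p b < C.rank p a) ∨
      (C.rank p b < C.rank p a ∧ C.rank p a < C.rank p c)) with ⟨h₁, h₂⟩ | ⟨h₁, h₂⟩ | ⟨h₁, h₂⟩
    · exact hR h₁ h₂
    · exact C.cycle (C.cycle (hR h₁ h₂))
    · exact C.cycle (hR h₁ h₂)
  · rintro (⟨h₁, h₂⟩ | ⟨h₁, h₂⟩ | ⟨h₁, h₂⟩)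
    · exact hR h₁ h₂
    · exact C.cycle (C.cycle (hR h₁ h₂))
    · exact C.cycle (hR h₁ h₂)

lemma chordsCross_iff_interleave {u v x y : α} (huv : C.rank p u < C.rank p v)
    (hxy : C.rank p x < C.rank p y) :
    C.ChordsCross (u, v) (x, y) ↔
      Interleave (C.rank p u, C.rank p v) (C.rank p x, C.rank p y) := by
  simp only [ChordsCross, Tuple4, R_iff_rank (p := p), Interleave]
  omega

variable (C p) (F : Finset (Sym2 α))

open scoped Classical in
noncomputable def rankChords : Finset (ℕ × ℕ) :=
  ((univ : Finset (α × α)).filter fun q => s(q.1, q.2) ∈ F ∧ C.rank p q.1 < C.rank p q.2).image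
    (Prod.map (C.rank p) (C.rank p))

lemma mem_rankChords {q : ℕ × ℕ} : q ∈ C.rankChords p F ↔
    ∃ u v, s(u, v) ∈ F ∧ C.rank p u < C.rank p v ∧ (C.rank p u, C.rank p v) = q := by
  simp [rankChords, and_assoc]

lemma chordsOn_rankChords : ChordsOn (univ.image (C.rank p)) (C.rankChords p F) := by
  intro q hq
  obtain ⟨u, v, -, huv, rfl⟩ := (C.mem_rankChords p F).1 hq
  exact ⟨mem_image_of_mem _ (mem_univ u), mem_image_of_mem _ (mem_univ v), huv⟩

variable {F} in
lemma card_rankChords (hF : ∀ e ∈ F, ¬ e.IsDiag) : #(C.rankChords p F) = #F := by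
  classical
  rw [rankChords, card_image_of_injective _ ((rank_injective C p).prodMap (rank_injective C p))]
  refine card_nbij (fun q => s(q.1, q.2)) (fun q hq => (mem_filter.1 hq).2.1) ?_ ?_
  · rintro ⟨u, v⟩ huv ⟨x, y⟩ hxy h
    simp only [mem_coe, mem_filter, mem_univ, true_and] at huv hxy
    rcases Sym2.eq_iff.1 h with ⟨rfl, rfl⟩ | ⟨rfl, rfl⟩
    · rfl
    · exact absurd (huv.2.trans hxy.2) (lt_irrefl _)
  · intro e he
    induction e with | _ u v => ?_
    rw [mem_coe] at he
    have huv := (rank_injective C p).ne (fun h => hF _ he (Sym2.mk_isDiag_iff.2 h))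
    rcases huv.lt_or_gt with h | h
    · exact ⟨(u, v), by simp [he, h], rfl⟩
    · exact ⟨(v, u), by simp [Sym2.eq_swap, he, h], Sym2.eq_swap⟩

variable {C p F} in
lemma exists_chordsCross_iff_interleave {q q' : ℕ × ℕ} (hq : q ∈ C.rankChords p F)
    (hq' : q' ∈ C.rankChords p F) (hqq' : EndpointsDisjoint q q') :
    ∃ u v x y, u ≠ x ∧ u ≠ y ∧ v ≠ x ∧ v ≠ y ∧ s(u, v) ∈ F ∧ s(x, y) ∈ F ∧
      (C.ChordsCross (u, v) (x, y) ↔ Interleave q q') := by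
  obtain ⟨u, v, huv, hlt, rfl⟩ := (C.mem_rankChords p F).1 hq
  obtain ⟨x, y, hxy, hlt', rfl⟩ := (C.mem_rankChords p F).1 hq'
  obtain ⟨h₁, h₂, h₃, h₄⟩ := hqq'
  exact ⟨u, v, x, y, ne_of_apply_ne (C.rank p) h₁, ne_of_apply_ne (C.rank p) h₂,
    ne_of_apply_ne (C.rank p) h₃, ne_of_apply_ne (C.rank p) h₄, huv, hxy,
    chordsCross_iff_interleave hlt hlt'⟩

end Rank

variable [Fintype α] [Nonempty α] (C) {F : Finset (Sym2 α)}

theorem card_le_of_forall_chordsCross (hF : ∀ e ∈ F, ¬ e.IsDiag)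
    (hcross : ∀ u v x y, u ≠ x → u ≠ y → v ≠ x → v ≠ y → s(u, v) ∈ F → s(x, y) ∈ F →
      C.ChordsCross (u, v) (x, y)) :
    #F ≤ 2 * Fintype.card α - 3 := by
  obtain ⟨p⟩ := ‹Nonempty α›
  have := (C.chordsOn_rankChords p F).card_le_of_interleave fun q hq q' hq' hqq' => by
    obtain ⟨u, v, x, y, hux, huy, hvx, hvy, huv, hxy, hiff⟩ :=
      exists_chordsCross_iff_interleave hq hq' hqq'
    exact hiff.1 (hcross u v x y hux huy hvx hvy huv hxy)
  rwa [C.card_rankChords p hF, card_image_of_injective _ (rank_injective C p), card_univ] at this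

theorem card_le_of_forall_not_chordsCross (hF : ∀ e ∈ F, ¬ e.IsDiag)
    (hcross : ∀ u v x y, u ≠ x → u ≠ y → v ≠ x → v ≠ y → s(u, v) ∈ F → s(x, y) ∈ F →
      ¬ C.ChordsCross (u, v) (x, y)) :
    #F ≤ 2 * Fintype.card α - 3 := by
  obtain ⟨p⟩ := ‹Nonempty α›
  have := (C.chordsOn_rankChords p F).card_le_of_not_interleave fun q hq q' hq' hqq' => by
    obtain ⟨u, v, x, y, hux, huy, hvx, hvy, huv, hxy, hiff⟩ :=
      exists_chordsCross_iff_interleave hq hq' hqq'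
    exact mt hiff.2 (hcross u v x y hux huy hvx hvy huv hxy)
  rwa [C.card_rankChords p hF, card_image_of_injective _ (rank_injective C p), card_univ] at this

end CyclicOrder

theorem goodColour_exists_general (k : ℕ) (hk : 1 ≤ k) (C : CyclicOrder (Fin (4 * k)))
    (E : Fin k → Set (Sym2 (Fin (4 * k))))
    (hsub : ∀ i, E i ⊆ (⊤ : SimpleGraph (Fin (4 * k))).edgeSet)
    (hcover : ∀ e ∈ (⊤ : SimpleGraph (Fin (4 * k))).edgeSet, ∃ i, e ∈ E i) :
    ∃ i : Fin k,
      (∃ u v x y : Fin (4 * k), u ≠ x ∧ u ≠ y ∧ v ≠ x ∧ v ≠ y ∧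
        s(u, v) ∈ E i ∧ s(x, y) ∈ E i ∧ C.ChordsCross (u, v) (x, y)) ∧
      (∃ u v x y : Fin (4 * k), u ≠ x ∧ u ≠ y ∧ v ≠ x ∧ v ≠ y ∧
        s(u, v) ∈ E i ∧ s(x, y) ∈ E i ∧ ¬ C.ChordsCross (u, v) (x, y)) := by
  classical
  have : Nonempty (Fin k) := ⟨⟨0, hk⟩⟩
  have : Nonempty (Fin (4 * k)) := ⟨⟨0, by omega⟩⟩
  obtain ⟨i, hi⟩ := exists_card_le_mul_card_of_subset_biUnion
    (A := (⊤ : SimpleGraph (Fin (4 * k))).edgeFinset) (E := fun i => (E i).toFinset) fun e he =>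
      have ⟨i, hi⟩ := hcover e (SimpleGraph.mem_edgeFinset.1 he)
      mem_biUnion.2 ⟨i, mem_univ i, Set.mem_toFinset.2 hi⟩
  rw [SimpleGraph.card_edgeFinset_top_eq_card_choose_two, Fintype.card_fin, Fintype.card_fin,
    Nat.choose_two_four_mul] at hi
  have hcard : 8 * k - 2 ≤ #(E i).toFinset := Nat.le_of_mul_le_mul_left hi hk
  have hdiag : ∀ e ∈ (E i).toFinset, ¬ e.IsDiag := fun e he =>
    SimpleGraph.not_isDiag_of_mem_edgeSet _ (hsub i (Set.mem_toFinset.1 he))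
  refine ⟨i, ?_, ?_⟩ <;> by_contra! h
  · have := C.card_le_of_forall_not_chordsCross hdiag (by simpa using h)
    rw [Fintype.card_fin] at this
    omega
  · have := C.card_le_of_forall_chordsCross hdiag (by simpa using h)
    rw [Fintype.card_fin] at this
    omega

/-- Let `k ≥ 1`, let `C` be a cyclic order on the vertex set of
`K_{4k}`, and let `(E_1, …, E_k)` be a partition of the edge set of `K_{4k}`. Then some
part `E_i` contains both a pair of non-incident edges that cross and a pair of
non-incident edges that do not cross. -/
theorem goodColour_exists (k : ℕ) (hk : 1 ≤ k) (C : CyclicOrder (Fin (4 * k)))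
    (E : Fin k → Set (Sym2 (Fin (4 * k))))
    (hsub : ∀ i, E i ⊆ (⊤ : SimpleGraph (Fin (4 * k))).edgeSet)
    (hcover : ∀ e ∈ (⊤ : SimpleGraph (Fin (4 * k))).edgeSet, ∃ i, e ∈ E i)
    (hdisj : ∀ i j, i ≠ j → Disjoint (E i) (E j)) :
    ∃ i : Fin k,
      (∃ u v x y : Fin (4 * k), u ≠ x ∧ u ≠ y ∧ v ≠ x ∧ v ≠ y ∧
        s(u, v) ∈ E i ∧ s(x, y) ∈ E i ∧ C.ChordsCross (u, v) (x, y)) ∧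
      (∃ u v x y : Fin (4 * k), u ≠ x ∧ u ≠ y ∧ v ≠ x ∧ v ≠ y ∧
        s(u, v) ∈ E i ∧ s(x, y) ∈ E i ∧ ¬ C.ChordsCross (u, v) (x, y)) :=
  goodColour_exists_general k hk C E hsub hcover
end

section
/- Let k ≥ 1, c ≥ 2, and q ≥ ck+1 be integers, and let α = (c−1)/c. If G is a graph such that for every set X ⊆ V(G) of size exactly q, G has a separation of order at most k that is α-balanced for X, then tw(G) ≤ q + k − 1. -/
/-!
Build, by induction on `|W|`, a tree-decomposition of `G[W]` with bags of size at most `q + k`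
whose root bag contains a prescribed set `S ⊆ W` with `|S| ≤ q`. If `|W| ≤ q + k` one bag
suffices. Otherwise enlarge `S` to `X ⊆ W` with `|X| = q` and take a balanced separation `(A, B)`
for `X` of order at most `k`. As `α q = q - q / c < q - k`, each side meets `X` outside `A ∩ B`
in fewer than `q - k` vertices; hence neither side contains `W`, and `(S ∪ (A ∩ B)) ∩ A` has
fewer than `q` vertices. The decompositions of `W ∩ A` and `W ∩ B` with these root sets hang
below a new root bag `S ∪ (W ∩ A ∩ B)`, of size at most `q + k`.
-/

open SimpleGraph

section WordTree

variable {ι : Type*}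

def wordTree (ι : Type*) : SimpleGraph (List ι) :=
  SimpleGraph.fromRel fun s t => ∃ i, t = s ++ [i]

lemma wordTree_adj_append (s : List ι) (i : ι) : (wordTree ι).Adj s (s ++ [i]) :=
  (fromRel_adj _ _ _).2 ⟨by simp, Or.inl ⟨i, rfl⟩⟩

def wordTree.consHom (i : ι) : wordTree ι →g wordTree ι where
  toFun := List.cons i
  map_rel' {s t} h := by
    obtain ⟨-, ⟨j, rfl⟩ | ⟨j, rfl⟩⟩ := (fromRel_adj _ _ _).1 h
    · exact wordTree_adj_append (i :: s) j
    · exact (wordTree_adj_append (i :: t) j).symm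

lemma wordTree_reachable_nil (s : List ι) : (wordTree ι).Reachable [] s := by
  induction s using List.reverseRecOn with
  | nil => rfl
  | append_singleton s i ih => exact ih.trans (wordTree_adj_append s i).reachable

/-- A walk from `s ++ [i]` to `s` must leave the subtree of words extending `s ++ [i]`, and the
only edge leaving it is `s(s ++ [i], s)`. -/
lemma wordTree_isBridge (s : List ι) (i : ι) : (wordTree ι).IsBridge s(s ++ [i], s) := by
  rintro ⟨p⟩
  obtain ⟨d, -, hfst, hsnd⟩ := p.exists_boundary_dart {x | s ++ [i] <+: x} List.prefix_rfl
    fun h => by simpa using h.length_le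
  obtain ⟨hadj, hdel⟩ := deleteEdges_adj.1 d.adj
  obtain ⟨-, ⟨j, hj⟩ | ⟨j, hj⟩⟩ := (fromRel_adj _ _ _).1 hadj
  · exact hsnd (hj ▸ hfst.trans (List.prefix_append _ _))
  · rw [Set.mem_ofPred_eq, hj, List.prefix_concat_iff] at hfst
    obtain ⟨hs, rfl⟩ := List.append_singleton_inj.1 (hfst.resolve_right hsnd).symm
    exact hdel (by simp [hj, hs])

theorem wordTree_isTree : (wordTree ι).IsTree := by
  refine ⟨(connected_iff_exists_forall_reachable _).2 ⟨[], wordTree_reachable_nil⟩, ?_⟩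
  refine isAcyclic_iff_forall_adj_isBridge.2 fun s t h => ?_
  obtain ⟨-, ⟨i, rfl⟩ | ⟨i, rfl⟩⟩ := (fromRel_adj _ _ _).1 h
  · exact Sym2.eq_swap ▸ wordTree_isBridge s i
  · exact wordTree_isBridge t i

end WordTree

section RootedDecomp

variable {V ι : Type*}

/-- All decompositions live on the fixed infinite tree `wordTree ι`; nodes that are not needed
carry empty or repeated bags. -/
structure IsRootedDecomp (G : SimpleGraph V) (W S : Set V) (w : ℕ) (β : List ι → Set V) :
    Prop where
  subset_root : S ⊆ β []
  bag_subset : ∀ t, β t ⊆ W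
  exists_mem_of_adj : ∀ ⦃a b⦄, a ∈ W → b ∈ W → G.Adj a b → ∃ t, a ∈ β t ∧ b ∈ β t
  connected : ∀ a ∈ W, ((wordTree ι).induce {t | a ∈ β t}).Connected
  ncard_le : ∀ t, (β t).ncard ≤ w

variable {G : SimpleGraph V}

lemma IsRootedDecomp.mono_root {W R S : Set V} {w : ℕ} {β : List ι → Set V}
    (h : IsRootedDecomp G W R w β) (hSR : S ⊆ R) : IsRootedDecomp G W S w β :=
  { h with subset_root := hSR.trans h.subset_root }

lemma isRootedDecomp_const {W S : Set V} {w : ℕ} (hSW : S ⊆ W) (hW : W.ncard ≤ w) :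
    IsRootedDecomp (ι := ι) G W S w fun _ => W where
  subset_root := hSW
  bag_subset _ := subset_rfl
  exists_mem_of_adj a b ha hb _ := ⟨[], ha, hb⟩
  connected a ha := by
    rw [show {t : List ι | a ∈ W} = Set.univ from Set.eq_univ_of_forall fun _ => ha]
    exact (induceUnivIso _).connected_iff.2 wordTree_isTree.1
  ncard_le _ := hW

def glueBags (R : Set V) (β : ι → List ι → Set V) : List ι → Set V
  | [] => R
  | i :: t => β i t

lemma reachable_glueBags_cons {R : Set V} {β : ι → List ι → Set V} {a : V} {i : ι}
    {s t : List ι} {hs : a ∈ β i s} {ht : a ∈ β i t}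
    (h : ((wordTree ι).induce {t | a ∈ β i t}).Reachable ⟨s, hs⟩ ⟨t, ht⟩) :
    ((wordTree ι).induce {t | a ∈ glueBags R β t}).Reachable ⟨i :: s, hs⟩ ⟨i :: t, ht⟩ :=
  let φ : (wordTree ι).induce {t | a ∈ β i t} →g (wordTree ι).induce {t | a ∈ glueBags R β t} :=
    ⟨fun x => ⟨i :: x.1, x.2⟩, (wordTree.consHom i).map_rel⟩
  h.map φ

variable {W R : Set V} {w : ℕ} {P : ι → Set V} {β : ι → List ι → Set V}

lemma connected_glueBags_of_mem (hβ : ∀ i, IsRootedDecomp G (W ∩ P i) (R ∩ P i) w (β i))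
    {a : V} (haR : a ∈ R) : ((wordTree ι).induce {t | a ∈ glueBags R β t}).Connected := by
  refine (connected_iff_exists_forall_reachable _).2 ⟨⟨[], haR⟩, ?_⟩
  rintro ⟨_ | ⟨i, t⟩, ht⟩
  · rfl
  have haP : a ∈ W ∩ P i := (hβ i).bag_subset t ht
  have hroot : a ∈ β i [] := (hβ i).subset_root ⟨haR, haP.2⟩
  have hchild := ((hβ i).connected a haP).preconnected ⟨[], hroot⟩ ⟨t, ht⟩
  have hadj : ((wordTree ι).induce {t | a ∈ glueBags R β t}).Adj ⟨[], haR⟩ ⟨[i], hroot⟩ :=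
    wordTree_adj_append [] i
  exact hadj.reachable.trans (reachable_glueBags_cons hchild)

lemma connected_glueBags_of_notMem (hβ : ∀ i, IsRootedDecomp G (W ∩ P i) (R ∩ P i) w (β i))
    {a : V} {i : ι} (haR : a ∉ R) (hai : a ∈ W ∩ P i) (hside : ∀ j, a ∈ P j → j = i) :
    ((wordTree ι).induce {t | a ∈ glueBags R β t}).Connected := by
  have hcons : ∀ t (ht : a ∈ glueBags R β t), ∃ s, t = i :: s := by
    rintro (_ | ⟨j, s⟩) ht
    · exact absurd ht haR
    · exact ⟨s, by rw [hside j ((hβ j).bag_subset s ht).2]⟩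
  obtain ⟨⟨t₀, ht₀⟩⟩ := ((hβ i).connected a hai).nonempty
  refine (connected_iff _).2 ⟨fun ⟨t, ht⟩ ⟨t', ht'⟩ => ?_, ⟨⟨i :: t₀, ht₀⟩⟩⟩
  obtain ⟨s, rfl⟩ := hcons t ht
  obtain ⟨s', rfl⟩ := hcons t' ht'
  exact reachable_glueBags_cons (((hβ i).connected a hai).preconnected ⟨s, ht⟩ ⟨s', ht'⟩)

theorem IsRootedDecomp.glue (hRW : R ⊆ W) (hR : R.ncard ≤ w)
    (hcover : ∀ a ∈ W, ∃ i, a ∈ P i)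
    (hadj : ∀ ⦃a b⦄, a ∈ W → b ∈ W → G.Adj a b → ∃ i, a ∈ P i ∧ b ∈ P i)
    (hoverlap : ∀ a ∈ W \ R, ∀ i j, a ∈ P i → a ∈ P j → i = j)
    (hβ : ∀ i, IsRootedDecomp G (W ∩ P i) (R ∩ P i) w (β i)) :
    IsRootedDecomp G W R w (glueBags R β) where
  subset_root := subset_rfl
  bag_subset
    | [] => hRW
    | i :: t => ((hβ i).bag_subset t).trans Set.inter_subset_left
  exists_mem_of_adj a b ha hb hab := by
    obtain ⟨i, hai, hbi⟩ := hadj ha hb hab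
    obtain ⟨t, hat, hbt⟩ := (hβ i).exists_mem_of_adj ⟨ha, hai⟩ ⟨hb, hbi⟩ hab
    exact ⟨i :: t, hat, hbt⟩
  connected a ha := by
    by_cases haR : a ∈ R
    · exact connected_glueBags_of_mem hβ haR
    · obtain ⟨i, hi⟩ := hcover a ha
      exact connected_glueBags_of_notMem hβ haR ⟨ha, hi⟩
        fun j hj => hoverlap a ⟨ha, haR⟩ j i hj hi
  ncard_le
    | [] => hR
    | i :: t => (hβ i).ncard_le t

end RootedDecomp

section Separation

variable {V : Type} {G : SimpleGraph V} {A B : Set V}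

lemma IsSeparation.mem_and_mem_of_adj (h : IsSeparation G A B) {a b : V} (hab : G.Adj a b) :
    (a ∈ A ∧ b ∈ A) ∨ (a ∈ B ∧ b ∈ B) := by
  have ha : a ∈ A ∪ B := h.1 ▸ Set.mem_univ a
  have hb : b ∈ A ∪ B := h.1 ▸ Set.mem_univ b
  have hab' : ¬ (a ∈ A \ B ∧ b ∈ B \ A) := fun ⟨ha, hb⟩ => h.2 a ha b hb hab
  have hba' : ¬ (b ∈ A \ B ∧ a ∈ B \ A) := fun ⟨hb, ha⟩ => h.2 b hb a ha hab.symm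
  simp only [Set.mem_union, Set.mem_sdiff] at ha hb hab' hba'
  tauto

theorem IsRootedDecomp.glueSeparation {W R : Set V} {w : ℕ} {βA βB : List Bool → Set V}
    (hsep : IsSeparation G A B) (hRW : R ⊆ W) (hR : R.ncard ≤ w) (hABR : W ∩ (A ∩ B) ⊆ R)
    (hA : IsRootedDecomp G (W ∩ A) (R ∩ A) w βA) (hB : IsRootedDecomp G (W ∩ B) (R ∩ B) w βB) :
    IsRootedDecomp G W R w (glueBags R fun i => bif i then βB else βA) := by
  refine IsRootedDecomp.glue (P := fun i => bif i then B else A) hRW hR ?_ ?_ ?_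
    (Bool.forall_bool.2 ⟨hA, hB⟩)
  · intro a _
    rcases (hsep.1 ▸ Set.mem_univ a : a ∈ A ∪ B) with ha | ha
    exacts [⟨false, ha⟩, ⟨true, ha⟩]
  · intro a b _ _ hab
    rcases hsep.mem_and_mem_of_adj hab with hab | hab
    exacts [⟨false, hab⟩, ⟨true, hab⟩]
  · rintro a ⟨haW, haR⟩ (_ | _) (_ | _) hi hj
    all_goals first
      | rfl
      | exact absurd (hABR ⟨haW, by simp_all⟩) haR

lemma inter_subset_inter_diff_union_inter {X S R : Set V} (hSX : S ⊆ X) (hR : R ⊆ S ∪ A ∩ B) :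
    R ∩ A ⊆ X ∩ (A \ B) ∪ A ∩ B := by
  rintro x ⟨hxR, hxA⟩
  by_cases hxB : x ∈ B
  · exact Or.inr ⟨hxA, hxB⟩
  · rcases hR hxR with hxS | hxAB
    exacts [Or.inl ⟨hSX hxS, hxA, hxB⟩, absurd hxAB.2 hxB]

end Separation

section Recursion

variable {V : Type} [Finite V] {G : SimpleGraph V} {q k : ℕ} {X A B : Set V}

lemma ncard_lt_of_subset_inter_diff_union_inter (hAB : (A ∩ B).ncard ≤ k)
    (hXA : (X ∩ (A \ B)).ncard + k < q) {Y : Set V} (hY : Y ⊆ X ∩ (A \ B) ∪ A ∩ B) : Y.ncard < q :=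
  calc Y.ncard ≤ (X ∩ (A \ B) ∪ A ∩ B).ncard := Set.ncard_le_ncard hY
    _ ≤ (X ∩ (A \ B)).ncard + (A ∩ B).ncard := Set.ncard_union_le _ _
    _ < q := by omega

lemma ncard_inter_lt_ncard_of_add_lt {W : Set V} (hXW : X ⊆ W) (hX : X.ncard = q)
    (hAB : (A ∩ B).ncard ≤ k) (hXA : (X ∩ (A \ B)).ncard + k < q) :
    (W ∩ A).ncard < W.ncard := by
  refine Set.ncard_lt_ncard (Set.inter_ssubset_left_iff.2 fun hWA => ?_)
  have hXside : X ⊆ X ∩ (A \ B) ∪ A ∩ B := fun x hx => by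
    by_cases hxB : x ∈ B
    exacts [Or.inr ⟨hWA (hXW hx), hxB⟩, Or.inl ⟨hx, hWA (hXW hx), hxB⟩]
  exact (ncard_lt_of_subset_inter_diff_union_inter hAB hXA hXside).ne hX

theorem exists_isRootedDecomp
    (hsep : ∀ X : Set V, X.ncard = q → ∃ A B : Set V, IsSeparation G A B ∧
      (A ∩ B).ncard ≤ k ∧ (X ∩ (A \ B)).ncard + k < q ∧ (X ∩ (B \ A)).ncard + k < q)
    (W S : Set V) (hSW : S ⊆ W) (hS : S.ncard ≤ q) :
    ∃ β : List Bool → Set V, IsRootedDecomp G W S (q + k) β := by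
  induction hn : W.ncard using Nat.strong_induction_on generalizing W S with
  | _ n IH =>
  by_cases hW : W.ncard ≤ q + k
  · exact ⟨_, isRootedDecomp_const hSW hW⟩
  obtain ⟨X, hSX, hXW, hX⟩ := Set.exists_subsuperset_card_eq hSW hS (by omega)
  obtain ⟨A, B, hsepAB, hAB, hXA, hXB⟩ := hsep X hX
  set R := S ∪ W ∩ (A ∩ B)
  have hRW : R ⊆ W := Set.union_subset hSW Set.inter_subset_left
  have hRS : R ⊆ S ∪ A ∩ B := Set.union_subset_union_right S Set.inter_subset_right
  have hchild : ∀ {A' B' : Set V}, (A' ∩ B').ncard ≤ k → (X ∩ (A' \ B')).ncard + k < q →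
      R ⊆ S ∪ A' ∩ B' → ∃ β : List Bool → Set V, IsRootedDecomp G (W ∩ A') (R ∩ A') (q + k) β := by
    intro A' B' hAB' hXA' hRS'
    have hroot := ncard_lt_of_subset_inter_diff_union_inter hAB' hXA'
      (inter_subset_inter_diff_union_inter hSX hRS')
    exact IH _ (hn ▸ ncard_inter_lt_ncard_of_add_lt hXW hX hAB' hXA') _ _
      (Set.inter_subset_inter_left _ hRW) hroot.le rfl
  obtain ⟨βA, hβA⟩ := hchild hAB hXA hRS
  obtain ⟨βB, hβB⟩ := hchild (Set.inter_comm A B ▸ hAB) hXB (Set.inter_comm A B ▸ hRS)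
  have hR : R.ncard ≤ q + k := (Set.ncard_union_le _ _).trans
    (add_le_add hS ((Set.ncard_le_ncard Set.inter_subset_right).trans hAB))
  exact ⟨_, (IsRootedDecomp.glueSeparation hsepAB hRW hR Set.subset_union_right hβA hβB).mono_root
    Set.subset_union_left⟩

end Recursion

lemma add_lt_of_le_div_mul {c k q m : ℕ} (hc : 0 < c) (hq : c * k + 1 ≤ q)
    (hm : (m : ℝ) ≤ ((c : ℝ) - 1) / c * q) : m + k < q := by
  have hc' : (0 : ℝ) < c := by exact_mod_cast hc
  have hq' : (c : ℝ) * k + 1 ≤ q := by exact_mod_cast hq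
  rw [div_mul_eq_mul_div, le_div_iff₀ hc'] at hm
  have : ((m + k : ℕ) : ℝ) < q := by push_cast; nlinarith
  exact_mod_cast this

lemma IsRootedDecomp.treewidthLE {V ι : Type} {G : SimpleGraph V} {S : Set V} {w : ℕ}
    {β : List ι → Set V} (h : IsRootedDecomp G Set.univ S (w + 1) β) : TreewidthLE G w :=
  ⟨List ι, wordTree ι, β, ⟨wordTree_isTree, fun _ _ hab => h.exists_mem_of_adj trivial trivial hab,
    fun a => h.connected a trivial⟩, h.ncard_le⟩

theorem treewidth_of_balanced_separations_general (k c q : ℕ) (hc : 2 ≤ c)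
    (hq : c * k + 1 ≤ q) {V : Type} [Fintype V] (G : SimpleGraph V)
    (h : ∀ X : Set V, X.ncard = q →
      ∃ A B : Set V, IsSeparation G A B ∧ (A ∩ B).ncard ≤ k ∧
        IsBalancedFor (((c : ℝ) - 1) / (c : ℝ)) X A B) :
    treewidth G ≤ q + k - 1 := by
  have hsep : ∀ X : Set V, X.ncard = q → ∃ A B : Set V, IsSeparation G A B ∧
      (A ∩ B).ncard ≤ k ∧ (X ∩ (A \ B)).ncard + k < q ∧ (X ∩ (B \ A)).ncard + k < q := by
    intro X hX
    obtain ⟨A, B, hAB, hk, hA, hB⟩ := h X hX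
    rw [hX] at hA hB
    exact ⟨A, B, hAB, hk, add_lt_of_le_div_mul (by omega) hq hA,
      add_lt_of_le_div_mul (by omega) hq hB⟩
  obtain ⟨β, hβ⟩ := exists_isRootedDecomp hsep Set.univ ∅ (Set.empty_subset _) (by simp)
  have hw : q + k - 1 + 1 = q + k := by omega
  exact Nat.sInf_le (IsRootedDecomp.treewidthLE (hw ▸ hβ))

/-- Let `k ≥ 1`, `c ≥ 2`, `q ≥ ck+1` be integers and `α = (c−1)/c`. If
every vertex set `X` of size exactly `q` admits an `α`-balanced separation of order at
most `k`, then `tw(G) ≤ q + k − 1`. -/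
theorem treewidth_of_balanced_separations (k c q : ℕ) (hk : 1 ≤ k) (hc : 2 ≤ c)
    (hq : c * k + 1 ≤ q) {V : Type} [Fintype V] (G : SimpleGraph V)
    (h : ∀ X : Set V, X.ncard = q →
      ∃ A B : Set V, IsSeparation G A B ∧ (A ∩ B).ncard ≤ k ∧
        IsBalancedFor (((c : ℝ) - 1) / (c : ℝ)) X A B) :
    treewidth G ≤ q + k - 1 :=
  treewidth_of_balanced_separations_general k c q hc hq G h
end

section
/- If a graph H is a minor of a graph G, then H is an induced minor of every proper subdivision of G. -/
/-! Every vertex of `H` is represented in `S` by the branch vertices of its branch set together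
with the interiors of the subdivision paths of the edges it owns: the edges inside its branch set,
and, for an edge `ww'` of `H` with `w < w'` in an auxiliary linear order, all edges of `G` from the
branch set of `w` to that of `w'`. Since the paths are proper, every edge of `S` has an interior
endpoint, so an edge of `S` between two such sets lies on the path of an edge owned by one side
and ending in the other, which forces adjacency in `H`. -/

open SimpleGraph Function

def subdivisionCarrier {V W : Type} {G : SimpleGraph V} {S : SimpleGraph W} (ι : V ↪ W)
    (P : ∀ ⦃u v : V⦄, G.Adj u v → S.Walk (ι u) (ι v)) (X : Set V) (F : Set (Sym2 V)) : Set W :=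
  ι '' X ∪ {x | x ∉ Set.range ι ∧ ∃ u v, ∃ h : G.Adj u v, s(u, v) ∈ F ∧ x ∈ (P h).support}

section subdivisionCarrier

variable {V W : Type} {G : SimpleGraph V} {S : SimpleGraph W} {ι : V ↪ W}
  {P : ∀ ⦃u v : V⦄, G.Adj u v → S.Walk (ι u) (ι v)} {X X' : Set V} {F F' : Set (Sym2 V)}

lemma apply_mem_subdivisionCarrier_iff {c : V} :
    ι c ∈ subdivisionCarrier ι P X F ↔ c ∈ X := by
  refine ⟨?_, fun hc => Or.inl ⟨c, hc, rfl⟩⟩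
  rintro (⟨d, hd, hdc⟩ | ⟨hc, -⟩)
  · exact ι.injective hdc ▸ hd
  · exact absurd ⟨c, rfl⟩ hc

lemma mem_subdivisionCarrier_of_mem_support {u v : V} {h : G.Adj u v} {x : W}
    (huv : s(u, v) ∈ F) (hx : x ∈ (P h).support) (hX : ∀ c, ι c = x → c ∈ X) :
    x ∈ subdivisionCarrier ι P X F := by
  by_cases hxι : x ∈ Set.range ι
  · obtain ⟨c, rfl⟩ := hxι
    exact apply_mem_subdivisionCarrier_iff.2 (hX c rfl)
  · exact Or.inr ⟨hxι, u, v, h, huv, hx⟩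

end subdivisionCarrier

namespace IsSubdivisionWith

variable {V W : Type} {G : SimpleGraph V} {S : SimpleGraph W} {ι : V ↪ W}
  {P : ∀ ⦃u v : V⦄, G.Adj u v → S.Walk (ι u) (ι v)} (hs : IsSubdivisionWith G S ι P)
  {X X' : Set V} {F F' : Set (Sym2 V)}
include hs

lemma isPath {u v : V} (h : G.Adj u v) : (P h).IsPath := hs.1 h

lemma support_symm {u v : V} (h : G.Adj u v) : (P h.symm).support = (P h).support.reverse := by
  rw [hs.2.1 h, Walk.support_reverse]

lemma eq_or_eq_of_mem_support {u v c : V} (h : G.Adj u v) (hc : ι c ∈ (P h).support) :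
    c = u ∨ c = v :=
  hs.2.2.1 h c hc

lemma sym2_eq_of_mem_support {u v u' v' : V} (h : G.Adj u v) (h' : G.Adj u' v') {x : W}
    (hx : x ∈ (P h).support) (hx' : x ∈ (P h').support) (hxι : x ∉ Set.range ι) :
    s(u, v) = s(u', v') := by
  by_contra hne
  exact hxι (hs.2.2.2.1 h h' hne x hx hx')

lemma exists_mem_edges {x y : W} (hxy : S.Adj x y) :
    ∃ u v, ∃ h : G.Adj u v, s(x, y) ∈ (P h).edges :=
  hs.2.2.2.2.2 hxy

lemma mem_of_mem_subdivisionCarrier {u v : V} {h : G.Adj u v} {x : W}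
    (hx : x ∈ subdivisionCarrier ι P X F) (hxP : x ∈ (P h).support) (hxι : x ∉ Set.range ι) :
    s(u, v) ∈ F := by
  rcases hx with ⟨c, -, rfl⟩ | ⟨-, u', v', h', huv', hx'⟩
  · exact absurd ⟨c, rfl⟩ hxι
  · rwa [hs.sym2_eq_of_mem_support h h' hxP hx' hxι]

lemma disjoint_subdivisionCarrier (hX : Disjoint X X') (hF : Disjoint F F') :
    Disjoint (subdivisionCarrier ι P X F) (subdivisionCarrier ι P X' F') := by
  rw [Set.disjoint_left]
  rintro x (⟨c, hc, rfl⟩ | ⟨hxι, u, v, h, huv, hx⟩) hx'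
  · exact Set.disjoint_left.1 hX hc (apply_mem_subdivisionCarrier_iff.1 hx')
  · exact Set.disjoint_left.1 hF huv (hs.mem_of_mem_subdivisionCarrier hx' hx hxι)

lemma support_subset_subdivisionCarrier {u v : V} (h : G.Adj u v) (huv : s(u, v) ∈ F)
    (hu : u ∈ X) (hv : v ∈ X) : ∀ x ∈ (P h).support, x ∈ subdivisionCarrier ι P X F :=
  fun _ hx => mem_subdivisionCarrier_of_mem_support huv hx fun c hc => by
    subst hc
    rcases hs.eq_or_eq_of_mem_support h hx with rfl | rfl <;> assumption

lemma support_takeUntil_subset_subdivisionCarrier [DecidableEq W] {u v : V} (h : G.Adj u v)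
    (huv : s(u, v) ∈ F) (hu : u ∈ X) {x : W} (hx : x ∈ (P h).support) (hxv : x ≠ ι v) :
    ∀ z ∈ ((P h).takeUntil x hx).support, z ∈ subdivisionCarrier ι P X F := by
  intro z hz
  have hzP := (P h).support_takeUntil_subset_support hx hz
  refine mem_subdivisionCarrier_of_mem_support huv hzP fun c hc => ?_
  subst hc
  rcases hs.eq_or_eq_of_mem_support h hzP with rfl | rfl
  · exact hu
  · exact absurd hz (Walk.endpoint_notMem_support_takeUntil (hs.isPath h) hx hxv.symm)

lemma connected_subdivisionCarrier (hX : (G.induce X).Connected)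
    (hFX : ∀ ⦃u v⦄, G.Adj u v → s(u, v) ∈ F → u ∈ X ∨ v ∈ X)
    (hXF : ∀ ⦃u v⦄, G.Adj u v → u ∈ X → v ∈ X → s(u, v) ∈ F) :
    (S.induce (subdivisionCarrier ι P X F)).Connected := by
  classical
  set C := subdivisionCarrier ι P X F
  have hιC : ∀ {c}, c ∈ X → ι c ∈ C := apply_mem_subdivisionCarrier_iff.2
  have branch : ∀ {c d : X}, (G.induce X).Walk c d →
      (S.induce C).Reachable ⟨ι c, hιC c.2⟩ ⟨ι d, hιC d.2⟩ := by
    intro c d p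
    induction p with
    | nil => rfl
    | @cons c d _ hadj _ ih =>
      have hcd : G.Adj c d := hadj
      exact ((P hcd).induce C
        (hs.support_subset_subdivisionCarrier hcd (hXF hcd c.2 d.2) c.2 d.2)).reachable.trans ih
  have to_branch : ∀ x (hx : x ∈ C), ∃ c, ∃ hc : c ∈ X,
      (S.induce C).Reachable ⟨ι c, hιC hc⟩ ⟨x, hx⟩ := by
    intro x hx
    rcases id hx with ⟨c, hc, rfl⟩ | ⟨hxι, u, v, h, huv, hxP⟩
    · exact ⟨c, hc, .refl _⟩
    have hxι' : ∀ c, x ≠ ι c := fun c hc => hxι ⟨c, hc.symm⟩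
    rcases hFX h huv with hu | hv
    · exact ⟨u, hu, (Walk.induce C _
        (hs.support_takeUntil_subset_subdivisionCarrier h huv hu hxP (hxι' v))).reachable⟩
    · have hxP' : x ∈ (P h.symm).support := by
        rwa [hs.support_symm, List.mem_reverse]
      exact ⟨v, hv, (Walk.induce C _
        (hs.support_takeUntil_subset_subdivisionCarrier h.symm (by rwa [Sym2.eq_swap]) hv hxP'
          (hxι' u))).reachable⟩
  obtain ⟨c₀⟩ := hX.nonempty
  rw [connected_iff_exists_forall_reachable]
  refine ⟨⟨ι c₀, hιC c₀.2⟩, fun ⟨x, hx⟩ => ?_⟩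
  obtain ⟨c, hc, hcx⟩ := to_branch x hx
  exact (branch (hX.preconnected c₀ ⟨c, hc⟩).some).trans hcx

lemma exists_mem_of_adj_of_notMem_range (hF : Disjoint F F') {x y : W} (hxy : S.Adj x y)
    (hx : x ∈ subdivisionCarrier ι P X F) (hy : y ∈ subdivisionCarrier ι P X' F')
    (hxι : x ∉ Set.range ι) : ∃ u v, s(u, v) ∈ F ∧ v ∈ X' := by
  obtain ⟨u, v, h, he⟩ := hs.exists_mem_edges hxy
  have huv := hs.mem_of_mem_subdivisionCarrier hx ((P h).fst_mem_support_of_mem_edges he) hxι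
  have hyP := (P h).snd_mem_support_of_mem_edges he
  by_cases hyι : y ∈ Set.range ι
  · obtain ⟨c, rfl⟩ := hyι
    have hc := apply_mem_subdivisionCarrier_iff.1 hy
    rcases hs.eq_or_eq_of_mem_support h hyP with rfl | rfl
    · exact ⟨v, c, Sym2.eq_swap ▸ huv, hc⟩
    · exact ⟨u, c, huv, hc⟩
  · exact absurd (hs.mem_of_mem_subdivisionCarrier hy hyP hyι) (Set.disjoint_left.1 hF huv)

variable (hlen : ∀ ⦃u v⦄ (h : G.Adj u v), 2 ≤ (P h).length)
include hlen

lemma exists_adj_notMem_range {u v : V} (h : G.Adj u v) :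
    ∃ x ∈ (P h).support, x ∉ Set.range ι ∧ S.Adj (ι u) x := by
  have hnil : ¬ (P h).Nil := Walk.not_nil_iff_lt_length.2 (by linarith [hlen h])
  refine ⟨(P h).snd, (P h).getVert_mem_support 1, ?_, Walk.adj_snd hnil⟩
  rintro ⟨c, hc⟩
  have hsnd : (P h).snd ∈ (P h).support := (P h).getVert_mem_support 1
  rcases hs.eq_or_eq_of_mem_support h (hc ▸ hsnd) with rfl | rfl
  · exact (Walk.adj_snd hnil).ne hc
  · have hedge := Walk.mk_start_snd_mem_edges hnil
    rw [← hc] at hedge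
    linarith [hlen h, (hs.isPath h).length_eq_one_of_mem_edges hedge]

lemma notMem_range_or_notMem_range_of_adj {x y : W} (hxy : S.Adj x y) :
    x ∉ Set.range ι ∨ y ∉ Set.range ι := by
  by_contra! hxyι
  obtain ⟨⟨c, rfl⟩, ⟨d, rfl⟩⟩ := hxyι
  obtain ⟨u, v, h, he⟩ := hs.exists_mem_edges hxy
  have hshort : (P h).length ≠ 1 := by linarith [hlen h]
  rcases hs.eq_or_eq_of_mem_support h ((P h).fst_mem_support_of_mem_edges he) with rfl | rfl <;>
    rcases hs.eq_or_eq_of_mem_support h ((P h).snd_mem_support_of_mem_edges he) with rfl | rfl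
  · exact hxy.ne rfl
  · exact hshort ((hs.isPath h).length_eq_one_of_mem_edges he)
  · exact hshort ((hs.isPath h).length_eq_one_of_mem_edges (Sym2.eq_swap ▸ he))
  · exact hxy.ne rfl

lemma exists_adj_subdivisionCarrier {u v : V} (h : G.Adj u v) (huv : s(u, v) ∈ F)
    (hv : v ∈ X') :
    ∃ x ∈ subdivisionCarrier ι P X F, ∃ y ∈ subdivisionCarrier ι P X' F', S.Adj x y := by
  obtain ⟨x, hxP, hxι, hvx⟩ := hs.exists_adj_notMem_range hlen h.symm
  exact ⟨x, Or.inr ⟨hxι, v, u, h.symm, by rwa [Sym2.eq_swap], hxP⟩,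
    ι v, apply_mem_subdivisionCarrier_iff.2 hv, hvx.symm⟩

lemma exists_mem_of_adj_subdivisionCarrier (hF : Disjoint F F') {x y : W} (hxy : S.Adj x y)
    (hx : x ∈ subdivisionCarrier ι P X F) (hy : y ∈ subdivisionCarrier ι P X' F') :
    (∃ u v, s(u, v) ∈ F ∧ v ∈ X') ∨ ∃ u v, s(u, v) ∈ F' ∧ v ∈ X :=
  (hs.notMem_range_or_notMem_range_of_adj hlen hxy).imp
    (hs.exists_mem_of_adj_of_notMem_range hF hxy hx hy)
    (hs.exists_mem_of_adj_of_notMem_range hF.symm hxy.symm hy hx)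

end IsSubdivisionWith

lemma Pairwise.eq_of_mem_of_mem {ι α : Type*} {f : ι → Set α} (hf : Pairwise (Disjoint on f))
    {a : α} {i j : ι} (hi : a ∈ f i) (hj : a ∈ f j) : i = j := by
  by_contra hne
  exact Set.disjoint_left.1 (hf hne) hi hj

def ownedEdges {U V : Type*} [LinearOrder U] (H : SimpleGraph U) (φ : U → Set V) (w : U) :
    Set (Sym2 V) :=
  {e | ∃ a ∈ φ w, ∃ w', ∃ b ∈ φ w', (w' = w ∨ w < w' ∧ H.Adj w w') ∧ e = s(a, b)}

section ownedEdges

variable {U V : Type*} [LinearOrder U] {H : SimpleGraph U} {φ : U → Set V}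

lemma mk_mem_ownedEdges_of_mem {w : U} {a b : V} (ha : a ∈ φ w) (hb : b ∈ φ w) :
    s(a, b) ∈ ownedEdges H φ w :=
  ⟨a, ha, w, b, hb, Or.inl rfl, rfl⟩

lemma mk_mem_ownedEdges_of_adj {w w' : U} (hA : H.Adj w w') (hlt : w < w') {a b : V}
    (ha : a ∈ φ w) (hb : b ∈ φ w') : s(a, b) ∈ ownedEdges H φ w :=
  ⟨a, ha, w', b, hb, Or.inr ⟨hlt, hA⟩, rfl⟩

lemma mem_or_mem_of_mk_mem_ownedEdges {w : U} {u v : V} (he : s(u, v) ∈ ownedEdges H φ w) :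
    u ∈ φ w ∨ v ∈ φ w := by
  obtain ⟨a, ha, w', b, hb, -, he⟩ := he
  rcases Sym2.eq_iff.1 he with ⟨rfl, -⟩ | ⟨-, rfl⟩
  exacts [Or.inl ha, Or.inr ha]

variable (hφ : Pairwise (Disjoint on φ))
include hφ

lemma disjoint_ownedEdges {w w' : U} (hne : w ≠ w') :
    Disjoint (ownedEdges H φ w) (ownedEdges H φ w') := by
  rw [Set.disjoint_left]
  rintro e ⟨a, ha, w₁, b, hb, h₁, rfl⟩ ⟨a', ha', w₂, b', hb', h₂, he⟩
  rcases Sym2.eq_iff.1 he with ⟨rfl, -⟩ | ⟨rfl, rfl⟩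
  · exact hne (hφ.eq_of_mem_of_mem ha ha')
  obtain rfl := hφ.eq_of_mem_of_mem hb' ha
  obtain rfl := hφ.eq_of_mem_of_mem hb ha'
  rcases h₁ with rfl | ⟨hlt, -⟩
  · exact hne rfl
  rcases h₂ with rfl | ⟨hgt, -⟩
  · exact hne rfl
  · exact lt_asymm hlt hgt

lemma adj_of_mk_mem_ownedEdges {w w' : U} (hne : w ≠ w') {u v : V}
    (he : s(u, v) ∈ ownedEdges H φ w) (hv : v ∈ φ w') : H.Adj w w' := by
  obtain ⟨a, ha, w₁, b, hb, h₁, he⟩ := he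
  rcases Sym2.eq_iff.1 he with ⟨-, rfl⟩ | ⟨-, rfl⟩
  · obtain rfl := hφ.eq_of_mem_of_mem hb hv
    rcases h₁ with rfl | ⟨-, hA⟩
    exacts [absurd rfl hne, hA]
  · exact absurd (hφ.eq_of_mem_of_mem ha hv) hne

end ownedEdges

/-- If `H` is a minor of `G`, then `H` is an induced minor of every
proper subdivision of `G`. -/
theorem inducedMinor_of_properSubdivision {U V W : Type}
    (H : SimpleGraph U) (G : SimpleGraph V) (S : SimpleGraph W)
    (hm : IsMinor H G) (hs : IsProperSubdivision G S) :
    IsInducedMinor H S := by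
  classical
  obtain ⟨φ, hconn, hdisj, hadj⟩ := hm
  obtain ⟨ι, P, hs, hlen⟩ := hs
  let : LinearOrder U := linearOrderOfSTO WellOrderingRel
  have hφ : Pairwise (Disjoint on φ) := fun w w' => hdisj w w'
  refine ⟨fun w => subdivisionCarrier ι P (φ w) (ownedEdges H φ w), fun w => ?_,
    fun w w' hne => hs.disjoint_subdivisionCarrier (hdisj w w' hne) (disjoint_ownedEdges hφ hne),
    fun w w' hne => ⟨fun hA => ?_, fun ⟨x, hx, y, hy, hxy⟩ => ?_⟩⟩
  · exact hs.connected_subdivisionCarrier (hconn w)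
      (fun _ _ _ => mem_or_mem_of_mk_mem_ownedEdges) (fun _ _ _ => mk_mem_ownedEdges_of_mem)
  · rcases hne.lt_or_gt with hlt | hgt
    · obtain ⟨a, ha, b, hb, hab⟩ := hadj w w' hA
      exact hs.exists_adj_subdivisionCarrier hlen hab (mk_mem_ownedEdges_of_adj hA hlt ha hb) hb
    · obtain ⟨a, ha, b, hb, hab⟩ := hadj w' w hA.symm
      obtain ⟨y, hy, x, hx, hyx⟩ := hs.exists_adj_subdivisionCarrier hlen hab
        (mk_mem_ownedEdges_of_adj hA.symm hgt ha hb) hb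
      exact ⟨x, hx, y, hy, hyx.symm⟩
  · rcases hs.exists_mem_of_adj_subdivisionCarrier hlen (disjoint_ownedEdges hφ hne) hxy hx hy
      with ⟨u, v, he, hv⟩ | ⟨u, v, he, hv⟩
    · exact adj_of_mk_mem_ownedEdges hφ hne he hv
    · exact (adj_of_mk_mem_ownedEdges hφ hne.symm he hv).symm
end
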